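/- arXiv:2510.20805 — 3 statements merged into one kernel-verified Lean document; each statement's English description precedes it below -/
import Mathlib

section
/- Let g(δ) = η₂·ℓ₂ − η₂·δ for δ ≤ τ and g(δ) = η₁·ℓ₁ + η₂·ℓ₂ + (η₁ − η₂)·δ for δ > τ, with 0 ≤ τ ≤ L, η₁, η₂ > 0, ℓ₁ ≥ 0, ℓ₂ ≥ 0. Then the minimizer of g over [0, L] is τ when τ ≥ L − (η₁/η₂)·(L + ℓ₁), and is L when τ < L − (η₁/η₂)·(L + ℓ₁) (where at δ = L we use the δ > τ branch when L > τ). -/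
theorem stmt_1 (η₁ η₂ L τ ℓ₁ ℓ₂ : ℝ) (hη₁ : 0 < η₁) (hη₂ : 0 < η₂)
    (hℓ₁ : 0 ≤ ℓ₁) (hℓ₂ : 0 ≤ ℓ₂) (hτ0 : 0 ≤ τ) (hτL : τ ≤ L)
    (g : ℝ → ℝ)
    (hg : ∀ δ, g δ = if δ ≤ τ then η₂ * ℓ₂ - η₂ * δ
        else η₁ * ℓ₁ + η₂ * ℓ₂ + (η₁ - η₂) * δ) :
    (τ ≥ L - (η₁ / η₂) * (L + ℓ₁) → ∀ δ ∈ Set.Icc (0:ℝ) L, g τ ≤ g δ) ∧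
    (τ < L - (η₁ / η₂) * (L + ℓ₁) → ∀ δ ∈ Set.Icc (0:ℝ) L, g L ≤ g δ) := by
  have hdiv : (η₁ / η₂) * (L + ℓ₁) * η₂ = η₁ * (L + ℓ₁) := by
    field_simp
  constructor
  · intro hc δ hδ
    obtain ⟨h0, hL⟩ := hδ
    have key : η₂ * L - η₁ * (L + ℓ₁) ≤ η₂ * τ := by
      have h := mul_le_mul_of_nonneg_right hc hη₂.le
      nlinarith [h]
    rw [hg, hg]
    rw [if_pos (le_refl τ)]
    by_cases hδτ : δ ≤ τ
    · rw [if_pos hδτ]; nlinarith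
    · rw [if_neg hδτ]
      push_neg at hδτ
      have h1 : 0 ≤ η₁ * (ℓ₁ + τ) := mul_nonneg hη₁.le (by linarith)
      have h2 : 0 ≤ η₁ * (L + ℓ₁) - η₂ * (L - τ) := by nlinarith
      nlinarith [mul_nonneg h1 (by linarith : (0:ℝ) ≤ L - δ),
        mul_nonneg h2 (by linarith : (0:ℝ) ≤ δ - τ)]
  · intro hc δ hδ
    obtain ⟨h0, hL⟩ := hδ
    have key : η₂ * τ < η₂ * L - η₁ * (L + ℓ₁) := by
      have h := mul_lt_mul_of_pos_right hc hη₂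
      nlinarith [h]
    have hLτ : τ < L := by nlinarith [mul_nonneg hη₁.le (by linarith : (0:ℝ) ≤ L + ℓ₁)]
    have hη : η₁ ≤ η₂ := by nlinarith
    rw [hg, hg]
    rw [if_neg (by linarith : ¬ L ≤ τ)]
    by_cases hδτ : δ ≤ τ
    · rw [if_pos hδτ]; nlinarith
    · rw [if_neg hδτ]
      push_neg at hδτ
      nlinarith [mul_nonneg (sub_nonneg.mpr hη) (sub_nonneg.mpr hL)]
end

section
/- Suppose misalignment holds: L − (η₁/η₂)(L + ℓ₁) ≤ τ < L − (η₁/η₂)L (so δ*_DC = L, δ*_SW = τ). Then the welfare loss from decentralized behavior is C_SW(L) − C_SW(τ) = η₁(ℓ₁ + L) − η₂(L − τ) ≥ 0, and it is strictly positive when the first inequality is strict. -/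
/-!
Past the threshold `τ` the social cost jumps by `η₁ ℓ₁` and then grows with slope `η₁ - η₂`,
so `C_SW(L) - C_SW(τ) = η₁ (ℓ₁ + L) - η₂ (L - τ)`. Multiplying the first misalignment inequality
by `η₂ > 0` turns it into exactly the (strict) nonnegativity of this difference.
-/

lemma sub_div_mul_le_iff_nonneg {a b c x y : ℝ} (hb : 0 < b) :
    x - a / b * c ≤ y ↔ 0 ≤ a * c - b * (x - y) := by
  rw [div_mul_eq_mul_div, sub_le_comm, le_div_iff₀ hb, sub_nonneg, mul_comm b]

lemma sub_div_mul_lt_iff_pos {a b c x y : ℝ} (hb : 0 < b) :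
    x - a / b * c < y ↔ 0 < a * c - b * (x - y) := by
  rw [div_mul_eq_mul_div, sub_lt_comm, lt_div_iff₀ hb, sub_pos, mul_comm b]

lemma piecewise_cost_sub_of_lt {η₁ η₂ τ ℓ₁ ℓ₂ δ : ℝ} {g : ℝ → ℝ}
    (hg : ∀ δ, g δ = if δ ≤ τ then η₂ * ℓ₂ - η₂ * δ
        else η₁ * ℓ₁ + η₂ * ℓ₂ + (η₁ - η₂) * δ)
    (hδ : τ < δ) :
    g δ - g τ = η₁ * (ℓ₁ + δ) - η₂ * (δ - τ) := by
  rw [hg δ, hg τ, if_neg hδ.not_ge, if_pos le_rfl]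
  ring

theorem stmt_10_general (η₁ η₂ L τ ℓ₁ ℓ₂ : ℝ) (hη₂ : 0 < η₂)
    (hτL : τ < L)
    (g : ℝ → ℝ)
    (hg : ∀ δ, g δ = if δ ≤ τ then η₂ * ℓ₂ - η₂ * δ
        else η₁ * ℓ₁ + η₂ * ℓ₂ + (η₁ - η₂) * δ)
    (hmis₁ : L - (η₁ / η₂) * (L + ℓ₁) ≤ τ) :
    g L - g τ = η₁ * (ℓ₁ + L) - η₂ * (L - τ) ∧
    0 ≤ g L - g τ ∧
    (L - (η₁ / η₂) * (L + ℓ₁) < τ → 0 < g L - g τ) := by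
  have hloss := piecewise_cost_sub_of_lt hg hτL
  refine ⟨hloss, ?_, fun hlt => ?_⟩
  · rw [hloss, add_comm ℓ₁]
    exact (sub_div_mul_le_iff_nonneg hη₂).mp hmis₁
  · rw [hloss, add_comm ℓ₁]
    exact (sub_div_mul_lt_iff_pos hη₂).mp hlt

theorem stmt_10 (η₁ η₂ L τ ℓ₁ ℓ₂ : ℝ) (hη₁ : 0 < η₁) (hη₂ : 0 < η₂)
    (hℓ₁ : 0 ≤ ℓ₁) (hL : 0 < L) (hτ0 : 0 ≤ τ) (hτL : τ < L)
    (g : ℝ → ℝ)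
    (hg : ∀ δ, g δ = if δ ≤ τ then η₂ * ℓ₂ - η₂ * δ
        else η₁ * ℓ₁ + η₂ * ℓ₂ + (η₁ - η₂) * δ)
    (hmis₁ : L - (η₁ / η₂) * (L + ℓ₁) ≤ τ)
    (hmis₂ : τ < L - (η₁ / η₂) * L) :
    g L - g τ = η₁ * (ℓ₁ + L) - η₂ * (L - τ) ∧
    0 ≤ g L - g τ ∧
    (L - (η₁ / η₂) * (L + ℓ₁) < τ → 0 < g L - g τ) :=
  stmt_10_general η₁ η₂ L τ ℓ₁ ℓ₂ hη₂ hτL g hg hmis₁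
end

section
/- In the three-bus dispatch with c₁ < c₂, if for some δ the total load at bus 1 satisfies ℓ₁ + δ ≤ F₀₁ − F₁₂ and ℓ₁ + δ ≤ −ℓ₀ − F₀₂ − F₁₂, then any optimal dispatch has y₁ = 0 and objective value c₂·(ℓ₂ − δ − F₀₂ − F₁₂), i.e., total system generation cost equals c₂ times the residual load at bus 2 after maximal imports. -/
/-- Feasibility for the three-bus economic dispatch problem. -/
def Feasible (ℓ₀ ℓ₁ ℓ₂ δ F₀₁ F₀₂ F₁₂ y₀ y₁ y₂ f₀₁ f₀₂ f₁₂ : ℝ) : Prop :=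
  (-y₀ - f₀₁ - f₀₂ = ℓ₀) ∧ (y₁ + f₀₁ - f₁₂ = ℓ₁ + δ) ∧ (y₂ + f₀₂ + f₁₂ = ℓ₂ - δ) ∧
  |f₀₁| ≤ F₀₁ ∧ |f₀₂| ≤ F₀₂ ∧ |f₁₂| ≤ F₁₂ ∧ 0 ≤ y₀ ∧ 0 ≤ y₁ ∧ 0 ≤ y₂

theorem stmt_14 (c₁ c₂ F₀₁ F₀₂ F₁₂ ℓ₀ ℓ₁ ℓ₂ δ : ℝ)
    (hc₁ : 0 < c₁) (hc : c₁ < c₂)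
    (hF₀₁ : 0 ≤ F₀₁) (hF₀₂ : 0 ≤ F₀₂) (hF₁₂ : 0 ≤ F₁₂)
    (hℓ₀ : ℓ₀ < 0) (hℓ₁ : 0 ≤ ℓ₁)
    (hbus2 : ℓ₂ - δ > F₀₂ + F₁₂)
    (h1 : ℓ₁ + δ ≤ F₀₁ - F₁₂) (h2 : ℓ₁ + δ ≤ -ℓ₀ - F₀₂ - F₁₂)
    (y₀ y₁ y₂ f₀₁ f₀₂ f₁₂ : ℝ)
    (hfeas : Feasible ℓ₀ ℓ₁ ℓ₂ δ F₀₁ F₀₂ F₁₂ y₀ y₁ y₂ f₀₁ f₀₂ f₁₂)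
    (hopt : ∀ y₀' y₁' y₂' f₀₁' f₀₂' f₁₂' : ℝ,
      Feasible ℓ₀ ℓ₁ ℓ₂ δ F₀₁ F₀₂ F₁₂ y₀' y₁' y₂' f₀₁' f₀₂' f₁₂' →
      c₁ * y₁ + c₂ * y₂ ≤ c₁ * y₁' + c₂ * y₂') :
    y₁ = 0 ∧ c₁ * y₁ + c₂ * y₂ = c₂ * (ℓ₂ - δ - F₀₂ - F₁₂) := by
  obtain ⟨hb0, hb1, hb2, ha01, ha02, ha12, hy0, hy1, hy2⟩ := hfeas
  rw [abs_le] at ha01 ha02 ha12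
  -- derived lower bound: -F₀₁ ≤ ℓ₁ + δ + F₁₂
  have hlb : -F₀₁ ≤ ℓ₁ + δ + F₁₂ := by
    have : f₀₁ = ℓ₁ + δ - y₁ + f₁₂ := by linarith
    nlinarith [ha01.1, ha12.2]
  -- candidate feasible point
  have hcand : Feasible ℓ₀ ℓ₁ ℓ₂ δ F₀₁ F₀₂ F₁₂
      (-ℓ₀ - ℓ₁ - δ - F₁₂ - F₀₂) 0 (ℓ₂ - δ - F₀₂ - F₁₂) (ℓ₁ + δ + F₁₂) F₀₂ F₁₂ := by
    refine ⟨by ring, by ring, by ring, ?_, ?_, ?_, by linarith, le_refl 0, by linarith⟩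
    · rw [abs_le]; constructor <;> linarith
    · rw [abs_of_nonneg hF₀₂]
    · rw [abs_of_nonneg hF₁₂]
  have hle := hopt _ _ _ _ _ _ hcand
  have hy2lb : ℓ₂ - δ - F₀₂ - F₁₂ ≤ y₂ := by linarith [ha02.2, ha12.2]
  have hy1z : y₁ = 0 := by nlinarith
  refine ⟨hy1z, ?_⟩
  nlinarith
end
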